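/- arXiv:2507.23557 — 9 statements merged into one kernel-verified Lean document; each statement's English description precedes it below -/
import Mathlib

section
/- Let T be a finite tree with vertex set V and edge set E, and let 0 < t ≤ 1/4 be a real number. Then the family indexed by functions x : E → ℕ with terms ∏_{v ∈ V} Cat_{X_v(x)} · t^{X_v(x)}, where X_v(x) = ∑_{e ∈ E, v ∈ e} x(e), is summable; moreover its sum is at most (∑_{n≥0} Cat_n t^n)^{|V|}. -/
/-!
Write `g n = Catₙ tⁿ`, so that the term indexed by `x` is `∏ᵥ g (X_v(x))`. On a forest the map
`x ↦ (X_v(x))_v` is injective: if `x ≠ y`, the edges on which they differ form a nonempty forest,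
which has a leaf `u`, and then `X_u(x) ≠ X_u(y)` because exactly one edge at `u` contributes
differently. Hence the family is a subfamily of `y ↦ ∏ᵥ g (y v)` over `V → ℕ`, whose sum is
`(∑ₙ g n)^{|V|}`. Finally `∑ₙ Catₙ 4⁻ⁿ` converges, as its partial sums telescope to
`2 - 2 binom(2n, n) / 4ⁿ`.
-/

open Finset in
theorem sum_range_catalan_div_four_pow (n : ℕ) :
    ∑ k ∈ range n, (catalan k : ℝ) / 4 ^ k = 2 - 2 * n.centralBinom / 4 ^ n := by
  induction n with
  | zero => simp
  | succ n ih =>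
    have hcat : ((n : ℝ) + 1) * catalan n = n.centralBinom := by
      exact_mod_cast succ_mul_catalan_eq_centralBinom n
    have hcb : ((n : ℝ) + 1) * (n + 1).centralBinom = 2 * (2 * n + 1) * n.centralBinom := by
      exact_mod_cast Nat.succ_mul_centralBinom_succ n
    rw [sum_range_succ, ih, pow_succ]
    field_simp
    refine mul_left_cancel₀ n.cast_add_one_ne_zero ?_
    linear_combination 4 * hcat + 2 * hcb

theorem summable_catalan_mul_pow {t : ℝ} (ht0 : 0 ≤ t) (ht : t ≤ 1 / 4) :
    Summable fun n ↦ (catalan n : ℝ) * t ^ n := by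
  have hquarter : Summable fun n ↦ (catalan n : ℝ) / 4 ^ n := by
    refine summable_of_sum_range_le (c := 2) (fun n ↦ by positivity) fun n ↦ ?_
    rw [sum_range_catalan_div_four_pow]
    have : (0 : ℝ) ≤ 2 * n.centralBinom / 4 ^ n := by positivity
    linarith
  refine hquarter.of_nonneg_of_le (fun n ↦ by positivity) fun n ↦ ?_
  rw [div_eq_mul_inv, ← inv_pow]
  gcongr
  linarith

section PiProduct

variable {W : Type*} [Fintype W] {g : ℕ → ℝ}

theorem sum_prod_le_tsum_pow (hg0 : ∀ n, 0 ≤ g n) (hg : Summable g) (s : Finset (W → ℕ)) :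
    ∑ y ∈ s, ∏ v, g (y v) ≤ (∑' n, g n) ^ Fintype.card W := by
  classical
  have hs : s ⊆ Fintype.piFinset fun v ↦ s.image (· v) := fun y hy ↦
    Fintype.mem_piFinset.mpr fun v ↦ Finset.mem_image_of_mem _ hy
  calc ∑ y ∈ s, ∏ v, g (y v)
      ≤ ∑ y ∈ Fintype.piFinset (fun v ↦ s.image (· v)), ∏ v, g (y v) :=
        Finset.sum_le_sum_of_subset_of_nonneg hs fun _ _ _ ↦ Finset.prod_nonneg fun _ _ ↦ hg0 _
    _ = ∏ v, ∑ n ∈ s.image (· v), g n := (Finset.prod_univ_sum _ _).symm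
    _ ≤ ∏ _v : W, ∑' n, g n :=
        Finset.prod_le_prod (fun _ _ ↦ Finset.sum_nonneg fun _ _ ↦ hg0 _)
          fun _ _ ↦ hg.sum_le_tsum _ fun _ _ ↦ hg0 _
    _ = (∑' n, g n) ^ Fintype.card W := Finset.prod_const _

theorem summable_prod_comp_and_tsum_le {α : Type*} (hg0 : ∀ n, 0 ≤ g n) (hg : Summable g)
    {Φ : α → W → ℕ} (hΦ : Function.Injective Φ) :
    Summable (fun x ↦ ∏ v, g (Φ x v)) ∧
      ∑' x, ∏ v, g (Φ x v) ≤ (∑' n, g n) ^ Fintype.card W := by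
  have hprod0 : ∀ y : W → ℕ, 0 ≤ ∏ v, g (y v) := fun y ↦ Finset.prod_nonneg fun _ _ ↦ hg0 _
  have hpi : Summable fun y : W → ℕ ↦ ∏ v, g (y v) :=
    summable_of_sum_le hprod0 (sum_prod_le_tsum_pow hg0 hg)
  exact ⟨hpi.comp_injective hΦ, (tsum_comp_le_tsum_of_inj hpi hprod0 hΦ).trans
    (hpi.tsum_le_of_sum_le (sum_prod_le_tsum_pow hg0 hg))⟩

end PiProduct

namespace SimpleGraph

variable {V : Type*} {G : SimpleGraph V}

theorem IsAcyclic.exists_existsUnique_adj [Finite G.edgeSet] (hG : G.IsAcyclic) {a b : V}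
    (hab : G.Adj a b) : ∃ u, ∃! w, G.Adj u w := by
  have : Nonempty V := ⟨a⟩
  obtain ⟨u, v, p, hp, hlongest⟩ := Walk.exists_isPath_forall_isPath_length_le_length G
  have hnil : ¬p.Nil := fun h ↦ by
    simpa [Walk.length_eq_zero_iff.mpr h] using hlongest a b hab.toWalk (by simp [hab.ne])
  refine ⟨u, p.snd, p.adj_snd hnil, fun w huw ↦ hG.eq_snd_of_adj_start hp huw ?_⟩
  by_contra hw
  have := hlongest w v (p.cons huw.symm) (hp.cons hw)
  simp at this

def incidenceSum [DecidableEq V] [Fintype G.edgeSet] {M : Type*} [AddCommMonoid M]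
    (x : G.edgeSet → M) (v : V) : M :=
  ∑ e : G.edgeSet, if v ∈ (e : Sym2 V) then x e else 0

theorem IsAcyclic.incidenceSum_injective [DecidableEq V] [Fintype G.edgeSet] {M : Type*}
    [AddCancelCommMonoid M] (hG : G.IsAcyclic) :
    Function.Injective (incidenceSum (G := G) (M := M)) := by
  intro x y hxy
  by_contra hne
  obtain ⟨⟨e, he⟩, hxe⟩ := Function.ne_iff.mp hne
  let H : SimpleGraph V := fromEdgeSet {e | ∃ h : e ∈ G.edgeSet, x ⟨e, h⟩ ≠ y ⟨e, h⟩}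
  have hHG : H ≤ G := fun _ _ hab ↦ ((fromEdgeSet_adj _).mp hab).1.1
  have hH {a b : V} (hab : G.Adj a b) (hdiff : x ⟨s(a, b), hab⟩ ≠ y ⟨s(a, b), hab⟩) :
      H.Adj a b :=
    (fromEdgeSet_adj _).mpr ⟨⟨hab, hdiff⟩, G.ne_of_adj hab⟩
  have : Finite H.edgeSet := Set.Finite.subset (Set.toFinite G.edgeSet) (edgeSet_mono hHG)
  obtain ⟨u, w, ⟨⟨huw, hxuw⟩, -⟩, hleaf⟩ : ∃ u, ∃! w, H.Adj u w := by
    induction e using Sym2.ind with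
    | _ a b => exact (hG.anti hHG).exists_existsUnique_adj (hH he hxe)
  have hrest : ∀ e ∈ Finset.univ.erase (⟨s(u, w), huw⟩ : G.edgeSet),
      (if u ∈ (e : Sym2 V) then x e else 0) = if u ∈ (e : Sym2 V) then y e else 0 := by
    rintro ⟨e, he⟩ hne
    refine ite_congr rfl (fun hue ↦ ?_) fun _ ↦ rfl
    by_contra hxye
    obtain ⟨c, rfl⟩ := Sym2.mem_iff_exists.mp hue
    obtain rfl := hleaf c (hH he hxye)
    exact Finset.ne_of_mem_erase hne rfl
  have hu := congrFun hxy u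
  simp only [incidenceSum] at hu
  rw [← Finset.add_sum_erase _ _ (Finset.mem_univ ⟨s(u, w), huw⟩),
    ← Finset.add_sum_erase _ _ (Finset.mem_univ ⟨s(u, w), huw⟩), Finset.sum_congr rfl hrest] at hu
  simp [hxuw] at hu

end SimpleGraph

/-- For a finite tree `G` and `0 < t ≤ 1/4`, the family of products of Catalan terms
indexed by edge-weight functions is summable, and its sum is bounded by
`(∑ₙ Catₙ tⁿ)^{|V|}`. -/
theorem stmt_2 {V : Type*} [Fintype V] [DecidableEq V] (G : SimpleGraph V)
    [DecidableRel G.Adj] (hT : G.IsTree) (t : ℝ) (ht0 : 0 < t) (ht : t ≤ 1 / 4) :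
    Summable (fun x : G.edgeSet → ℕ =>
      ∏ v : V,
        (catalan (∑ e : G.edgeSet, if v ∈ (e : Sym2 V) then x e else 0) : ℝ) *
          t ^ (∑ e : G.edgeSet, if v ∈ (e : Sym2 V) then x e else 0)) ∧
    (∑' x : G.edgeSet → ℕ,
      ∏ v : V,
        (catalan (∑ e : G.edgeSet, if v ∈ (e : Sym2 V) then x e else 0) : ℝ) *
          t ^ (∑ e : G.edgeSet, if v ∈ (e : Sym2 V) then x e else 0)) ≤
      (∑' n : ℕ, (catalan n : ℝ) * t ^ n) ^ (Fintype.card V) := by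
  have hcat0 : ∀ n, 0 ≤ (catalan n : ℝ) * t ^ n := fun n ↦ by positivity
  exact summable_prod_comp_and_tsum_le hcat0 (summable_catalan_mul_pow ht0.le ht)
    (hT.isAcyclic.incidenceSum_injective (M := ℕ))
end

section
/- Let T be a finite tree with vertex set V and edge set E. Then the map from functions x : E → ℕ to functions X : V → ℕ given by X_v = ∑_{e ∈ E, v ∈ e} x(e) (the sum of the edge weights over the edges incident to v) is injective. -/
open SimpleGraph

section Aux

variable {V : Type*} {G : SimpleGraph V}

/-- In a tree, every path realizes the distance between its endpoints. -/
lemma tree_path_length (hT : G.IsTree) {u v : V} (p : G.Walk u v) (hp : p.IsPath) :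
    p.length = G.dist u v := by
  obtain ⟨q, hq, hlen⟩ := (hT.isConnected u v).exists_path_of_dist
  obtain ⟨w, hw, huniq⟩ := hT.existsUnique_path u v
  rw [huniq p hp, ← huniq q hq, hlen]

/-- If `b` lies on a path to `c` in a tree and `b ≠ c` then `dist r b < dist r c`. -/
lemma tree_not_mem_support [DecidableEq V] (hT : G.IsTree) {r b c : V} (q : G.Walk r c) (hq : q.IsPath)
    (hd : G.dist r b ≥ G.dist r c) (hbc : b ≠ c) : b ∉ q.support := by
  intro hb
  have h1 : (q.takeUntil b hb).length = G.dist r b :=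
    tree_path_length hT _ (hq.takeUntil hb)
  have h2 := q.length_takeUntil_le hb
  have h3 : q.length = G.dist r c := tree_path_length hT _ hq
  have h4 : (q.takeUntil b hb).length = q.length := by omega
  have := congr_arg SimpleGraph.Walk.length (q.take_spec hb)
  rw [SimpleGraph.Walk.length_append] at this
  have h5 : (q.dropUntil b hb).length = 0 := by omega
  exact hbc (SimpleGraph.Walk.eq_of_length_eq_zero h5)

/-- In a tree, distances of adjacent vertices to a root differ by exactly one. -/
lemma tree_adj_dist [DecidableEq V] (hT : G.IsTree) (r : V) {b c : V} (h : G.Adj b c) :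
    G.dist r c = G.dist r b + 1 ∨ G.dist r b = G.dist r c + 1 := by
  have hbc : G.dist b c = 1 := by rwa [SimpleGraph.dist_eq_one_iff_adj]
  have hcb : G.dist c b = 1 := by rwa [SimpleGraph.dist_eq_one_iff_adj, adj_comm] at hbc ⊢
  have t1 : G.dist r c ≤ G.dist r b + 1 := by
    have := hT.isConnected.dist_triangle (u := r) (v := b) (w := c); omega
  have t2 : G.dist r b ≤ G.dist r c + 1 := by
    have := hT.isConnected.dist_triangle (u := r) (v := c) (w := b); omega
  by_contra hcon
  push_neg at hcon
  have heq : G.dist r c = G.dist r b := by omega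
  -- build a path from r to c and extend it by the edge c-b : a path to b of wrong length
  obtain ⟨q, hq, hlen⟩ := (hT.isConnected r c).exists_path_of_dist
  have hbq : b ∉ q.support := tree_not_mem_support hT q hq (by omega) h.ne
  have hpath : (q.concat h.symm).IsPath := by
    rw [← SimpleGraph.Walk.isPath_reverse_iff, SimpleGraph.Walk.reverse_concat]
    exact hq.reverse.cons (by simpa using hbq)
  have := tree_path_length hT _ hpath
  rw [SimpleGraph.Walk.length_concat, hlen] at this
  omega

/-- Uniqueness of the parent in a tree. -/
lemma tree_parent_unique [DecidableEq V] (hT : G.IsTree) (r : V) {b c₁ c₂ : V}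
    (h₁ : G.Adj c₁ b) (h₂ : G.Adj c₂ b)
    (d₁ : G.dist r b = G.dist r c₁ + 1) (d₂ : G.dist r b = G.dist r c₂ + 1) : c₁ = c₂ := by
  obtain ⟨q₁, hq₁, hl₁⟩ := (hT.isConnected r c₁).exists_path_of_dist
  obtain ⟨q₂, hq₂, hl₂⟩ := (hT.isConnected r c₂).exists_path_of_dist
  have hb₁ : b ∉ q₁.support := tree_not_mem_support hT q₁ hq₁ (by omega) (fun hh => by
    subst hh; omega)
  have hb₂ : b ∉ q₂.support := tree_not_mem_support hT q₂ hq₂ (by omega) (fun hh => by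
    subst hh; omega)
  have hp₁ : (q₁.concat h₁).IsPath := by
    rw [← SimpleGraph.Walk.isPath_reverse_iff, SimpleGraph.Walk.reverse_concat]
    exact hq₁.reverse.cons (by simpa using hb₁)
  have hp₂ : (q₂.concat h₂).IsPath := by
    rw [← SimpleGraph.Walk.isPath_reverse_iff, SimpleGraph.Walk.reverse_concat]
    exact hq₂.reverse.cons (by simpa using hb₂)
  obtain ⟨w, hw, huniq⟩ := hT.existsUnique_path r b
  have heq : q₁.concat h₁ = q₂.concat h₂ := by rw [huniq _ hp₁, huniq _ hp₂]
  obtain ⟨hv, -⟩ := SimpleGraph.Walk.concat_inj heq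
  exact hv

end Aux

/-- For a finite tree `G` on vertex set `V`, the map sending edge weights
`x : E → ℕ` to the vertex weights `v ↦ ∑_{e ∋ v} x e` is injective. -/
theorem stmt_3 {V : Type*} [Fintype V] [DecidableEq V] (G : SimpleGraph V)
    [DecidableRel G.Adj] (hT : G.IsTree) :
    Function.Injective
      (fun x : G.edgeSet → ℕ => fun v : V =>
        ∑ e : G.edgeSet, if v ∈ (e : Sym2 V) then x e else 0) := by
  intro x y hxy
  haveI : Nonempty V := hT.isConnected.nonempty
  set r : V := Classical.arbitrary V with hr
  set d : G.edgeSet → ℤ := fun e => (x e : ℤ) - (y e : ℤ) with hd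
  have H : ∀ v : V, ∑ e : G.edgeSet, (if v ∈ (e : Sym2 V) then d e else 0) = 0 := by
    intro v
    have hv := congrFun hxy v
    simp only at hv
    have hZ : ∑ e : G.edgeSet, ((if v ∈ (e : Sym2 V) then (x e : ℤ) else 0)
        - (if v ∈ (e : Sym2 V) then (y e : ℤ) else 0)) = 0 := by
      have h' : ((∑ e : G.edgeSet, if v ∈ (e : Sym2 V) then x e else 0 : ℕ) : ℤ)
          = ((∑ e : G.edgeSet, if v ∈ (e : Sym2 V) then y e else 0 : ℕ) : ℤ) := by
        exact_mod_cast hv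
      push_cast at h'
      rw [Finset.sum_sub_distrib, sub_eq_zero]
      exact h'
    calc ∑ e : G.edgeSet, (if v ∈ (e : Sym2 V) then d e else 0)
        = ∑ e : G.edgeSet, ((if v ∈ (e : Sym2 V) then (x e : ℤ) else 0)
            - (if v ∈ (e : Sym2 V) then (y e : ℤ) else 0)) :=
          Finset.sum_congr rfl (fun e _ => by
            by_cases h : v ∈ (e : Sym2 V) <;> simp [hd, h])
      _ = 0 := hZ
  -- depth of an edge
  set D : G.edgeSet → ℕ := fun e =>
    Sym2.lift ⟨fun a b => G.dist r a + G.dist r b, fun a b => by ring⟩ (e : Sym2 V) with hD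
  -- the key step: edges where d ≠ 0 cannot have maximal depth
  have key : ∀ e₀ : G.edgeSet, (∀ e : G.edgeSet, d e ≠ 0 → D e ≤ D e₀) →
      ∀ a b : V, (e₀ : Sym2 V) = s(a, b) → G.Adj a b →
      G.dist r b = G.dist r a + 1 → d e₀ = 0 := by
    intro e₀ hmax a b he hab hdist
    have hbmem : b ∈ (e₀ : Sym2 V) := by rw [he]; exact Sym2.mem_mk_right a b
    have hsum := H b
    rw [Finset.sum_eq_single e₀] at hsum
    · rwa [if_pos hbmem] at hsum
    · intro e _ hne
      by_cases hbe : b ∈ (e : Sym2 V)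
      · rw [if_pos hbe]
        set c := Sym2.Mem.other' hbe with hc
        have hec : (e : Sym2 V) = s(b, c) := (Sym2.other_spec' hbe).symm
        have hbc : G.Adj b c := by
          have := e.2
          rwa [hec, SimpleGraph.mem_edgeSet] at this
        rcases tree_adj_dist hT r hbc with h1 | h1
        · -- c is deeper : depth of e exceeds depth of e₀
          by_contra hdne
          have := hmax e hdne
          have hDe : D e = G.dist r b + G.dist r c := by
            simp only [hD, hec, Sym2.lift_mk]
          have hDe₀ : D e₀ = G.dist r a + G.dist r b := by
            simp only [hD, he, Sym2.lift_mk]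
          omega
        · -- c is a parent of b, so c = a, contradicting e ≠ e₀
          have hca : c = a := tree_parent_unique hT r hbc.symm hab h1 hdist
          exfalso
          apply hne
          apply Subtype.ext
          rw [hec, hca, he, Sym2.eq_swap]
      · rw [if_neg hbe]
    · intro h
      exact absurd (Finset.mem_univ e₀) h
  -- now conclude
  have hzero : ∀ e : G.edgeSet, d e = 0 := by
    by_contra hcon
    push_neg at hcon
    obtain ⟨e', he'⟩ := hcon
    set S : Finset G.edgeSet := Finset.univ.filter (fun e => d e ≠ 0) with hS
    have hSne : S.Nonempty := ⟨e', by simp [hS, he']⟩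
    obtain ⟨e₀, he₀S, he₀max⟩ := Finset.exists_max_image S D hSne
    have hmax : ∀ e : G.edgeSet, d e ≠ 0 → D e ≤ D e₀ := fun e he =>
      he₀max e (by simp [hS, he])
    have hd₀ : d e₀ ≠ 0 := by
      have := he₀S; simp [hS] at this; exact this
    obtain ⟨a, b, hab⟩ : ∃ a b : V, (e₀ : Sym2 V) = s(a, b) := by
      induction (e₀ : Sym2 V) using Sym2.inductionOn with
      | hf a b => exact ⟨a, b, rfl⟩
    have hadj : G.Adj a b := by
      have := e₀.2
      rwa [hab, SimpleGraph.mem_edgeSet] at this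
    rcases tree_adj_dist hT r hadj with h1 | h1
    · exact hd₀ (key e₀ hmax a b hab hadj h1)
    · exact hd₀ (key e₀ hmax b a (by rw [hab, Sym2.eq_swap]) hadj.symm h1)
  funext e
  have := hzero e
  simp only [hd] at this
  omega
end

section
/- For every integer K ≥ 0 and every real t with 0 < t ≤ 1/4, one has ∑_{n≥0} Cat_n · Cat_{n+K} · t^{2n} = ((K+1)·Cat_K / (4(1−2K)·t²)) · ( ∑_{n≥0} ((−1/2)^{↑n} · (K−1/2)^{↑n} / ((K+1)^{↑n} · n!)) · (16t²)^n − 1 ), where both series converge. -/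
/-!
After the substitution `x = t²`, multiplying the `n`-th term `Catₙ Cat_{n+K} xⁿ` of the Catalan series
by `4(1 - 2K)x / ((K + 1) Cat_K)` gives exactly the `(n + 1)`-st term of `₂F₁(-1/2, K - 1/2; K + 1; 16x)`:
both sides have the term ratio `4(2n + 1)(2n + 2K + 1) / ((n + 2)(n + K + 2))` and they agree at
`n = 0`. Convergence for `|x| ≤ 1/16` comes from `Catₙ ≤ 4ⁿ / (n + 1)`, which makes the terms
`O(1 / n²)`.
-/

open Polynomial

lemma catalan_pos (n : ℕ) : 0 < catalan n :=
  Nat.pos_of_mul_pos_left ((succ_mul_catalan_eq_centralBinom n).symm ▸ Nat.centralBinom_pos n)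

lemma catalan_le_four_pow_div (n : ℕ) : (catalan n : ℝ) ≤ 4 ^ n / (n + 1) := by
  rw [le_div_iff₀ (by positivity), mul_comm]
  exact_mod_cast succ_mul_catalan_eq_centralBinom n ▸ Nat.centralBinom_le_four_pow n

lemma catalan_succ_eq_div_mul (n : ℕ) :
    (catalan (n + 1) : ℝ) = 2 * (2 * n + 1) / (n + 2) * catalan n := by
  have h : (n + 1) * ((n + 1 + 1) * catalan (n + 1)) = (n + 1) * (2 * (2 * n + 1) * catalan n) := by
    rw [succ_mul_catalan_eq_centralBinom, Nat.succ_mul_centralBinom_succ,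
      ← succ_mul_catalan_eq_centralBinom n]
    ring
  have h' : ((n : ℝ) + 2) * catalan (n + 1) = 2 * (2 * n + 1) * catalan n := by
    exact_mod_cast Nat.eq_of_mul_eq_mul_left n.succ_pos h
  rw [div_mul_eq_mul_div, eq_div_iff (by positivity), ← h', mul_comm]

lemma summable_catalan_mul_catalan_add_mul_pow (K : ℕ) {x : ℝ} (hx : |x| ≤ 1 / 16) :
    Summable fun n : ℕ => (catalan n : ℝ) * catalan (n + K) * x ^ n := by
  have h_inv_sq : Summable fun n : ℕ => (4 : ℝ) ^ K / ((n : ℝ) + 1) ^ 2 := by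
    have := (summable_nat_add_iff 1).mpr (Real.summable_one_div_nat_pow.mpr one_lt_two)
    simpa [div_eq_mul_inv] using this.mul_left ((4 : ℝ) ^ K)
  refine h_inv_sq.of_norm_bounded fun n => ?_
  have h_shift : (catalan (n + K) : ℝ) ≤ 4 ^ (n + K) / (n + 1) :=
    (catalan_le_four_pow_div _).trans <|
      div_le_div_of_nonneg_left (by positivity) (by positivity) (by push_cast; linarith)
  have h_pow : |x| ^ n ≤ (1 / 16) ^ n := pow_le_pow_left₀ (abs_nonneg x) hx n
  calc ‖(catalan n : ℝ) * catalan (n + K) * x ^ n‖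
      = (catalan n : ℝ) * catalan (n + K) * |x| ^ n := by
        rw [Real.norm_eq_abs, abs_mul, abs_mul, abs_pow, Nat.abs_cast, Nat.abs_cast]
    _ ≤ 4 ^ n / (n + 1) * (4 ^ (n + K) / (n + 1)) * (1 / 16) ^ n := by
        gcongr
        exact catalan_le_four_pow_div n
    _ = 4 ^ K / ((n : ℝ) + 1) ^ 2 := by
        rw [pow_add, div_pow, one_pow, show (16 : ℝ) ^ n = 4 ^ n * 4 ^ n by
          rw [← mul_pow]; norm_num]
        field_simp

lemma ordinaryHypergeometricCoefficient_eq_div {𝕂 : Type*} [Field 𝕂] (a b c : 𝕂) (n : ℕ) :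
    ordinaryHypergeometricCoefficient a b c n = (ascPochhammer 𝕂 n).eval a *
      (ascPochhammer 𝕂 n).eval b / ((ascPochhammer 𝕂 n).eval c * n.factorial) := by
  rw [ordinaryHypergeometricCoefficient]
  ring

lemma ordinaryHypergeometricCoefficient_succ {𝕂 : Type*} [Field 𝕂] (a b c : 𝕂) (n : ℕ) :
    ordinaryHypergeometricCoefficient a b c (n + 1) =
      ordinaryHypergeometricCoefficient a b c n * ((a + n) * (b + n)) / ((c + n) * (n + 1)) := by
  simp only [ordinaryHypergeometricCoefficient, ascPochhammer_succ_eval, Nat.factorial_succ,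
    Nat.cast_mul, Nat.cast_succ, div_eq_mul_inv, mul_inv]
  ring

lemma ordinaryHypergeometricCoefficient_succ_mul_sixteen_pow (K n : ℕ) :
    ordinaryHypergeometricCoefficient (-(1 / 2) : ℝ) (K - 1 / 2) (K + 1) (n + 1) * 16 ^ (n + 1) =
      4 * (1 - 2 * K) / ((K + 1) * catalan K) * (catalan n * catalan (n + K)) := by
  have hK : (catalan K : ℝ) ≠ 0 := by exact_mod_cast (catalan_pos K).ne'
  induction n with
  | zero =>
    simp only [ordinaryHypergeometricCoefficient_succ, ordinaryHypergeometricCoefficient,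
      ascPochhammer_zero, eval_one, Nat.factorial_zero, Nat.cast_zero, zero_add, catalan_zero]
    field_simp
    ring
  | succ n ih =>
    rw [ordinaryHypergeometricCoefficient_succ, pow_succ, div_mul_eq_mul_div, mul_mul_mul_comm, ih,
      add_right_comm n 1 K, catalan_succ_eq_div_mul, catalan_succ_eq_div_mul]
    push_cast
    field_simp
    ring

lemma hasSum_hypergeometric_catalan (K : ℕ) {x : ℝ} (hx : |x| ≤ 1 / 16) :
    HasSum (fun n => ordinaryHypergeometricCoefficient (-(1 / 2) : ℝ) (K - 1 / 2) (K + 1) n *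
        (16 * x) ^ n)
      (1 + 4 * (1 - 2 * K) * x / ((K + 1) * catalan K) *
        ∑' n, (catalan n : ℝ) * catalan (n + K) * x ^ n) := by
  let f n := ordinaryHypergeometricCoefficient (-(1 / 2) : ℝ) (K - 1 / 2) (K + 1) n * (16 * x) ^ n
  have h_tail := ((summable_catalan_mul_catalan_add_mul_pow K hx).hasSum.mul_left
    (4 * (1 - 2 * K) * x / ((K + 1) * catalan K))).congr_fun (g := fun n => f (n + 1)) fun n => by
    simp only [f]
    rw [mul_pow, ← mul_assoc, ordinaryHypergeometricCoefficient_succ_mul_sixteen_pow]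
    ring
  have h_zero : f 0 = 1 := by simp [f, ordinaryHypergeometricCoefficient]
  have h_sum := (hasSum_nat_add_iff 1).mp h_tail
  rwa [Finset.sum_range_one, h_zero, add_comm _ (1 : ℝ)] at h_sum

/-- For `K ≥ 0` and `0 < t ≤ 1/4`,
`∑ₙ Catₙ Cat_{n+K} t^{2n} = ((K+1)·Cat_K / (4(1−2K)t²)) · (₂F₁(−1/2,K−1/2;K+1;16t²) − 1)`,
both series being convergent. -/
theorem stmt_4 (K : ℕ) (t : ℝ) (ht0 : 0 < t) (ht : t ≤ 1 / 4) :
    Summable (fun n : ℕ => (catalan n : ℝ) * (catalan (n + K) : ℝ) * t ^ (2 * n)) ∧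
    Summable (fun n : ℕ =>
      (ascPochhammer ℝ n).eval (-(1 / 2) : ℝ) * (ascPochhammer ℝ n).eval ((K : ℝ) - 1 / 2) /
        ((ascPochhammer ℝ n).eval ((K : ℝ) + 1) * (n.factorial : ℝ)) * (16 * t ^ 2) ^ n) ∧
    (∑' n : ℕ, (catalan n : ℝ) * (catalan (n + K) : ℝ) * t ^ (2 * n)) =
      ((K : ℝ) + 1) * (catalan K : ℝ) / (4 * (1 - 2 * (K : ℝ)) * t ^ 2) *
        ((∑' n : ℕ,
          (ascPochhammer ℝ n).eval (-(1 / 2) : ℝ) * (ascPochhammer ℝ n).eval ((K : ℝ) - 1 / 2) /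
            ((ascPochhammer ℝ n).eval ((K : ℝ) + 1) * (n.factorial : ℝ)) * (16 * t ^ 2) ^ n) - 1) := by
  have hx : |t ^ 2| ≤ 1 / 16 := by
    rw [abs_of_nonneg (by positivity)]
    nlinarith
  have h_sum := hasSum_hypergeometric_catalan K hx
  simp only [pow_mul, ← ordinaryHypergeometricCoefficient_eq_div]
  refine ⟨summable_catalan_mul_catalan_add_mul_pow K hx, h_sum.summable, ?_⟩
  have h_odd : (1 : ℝ) - 2 * K ≠ 0 := by
    rw [sub_ne_zero]
    exact_mod_cast (by omega : 1 ≠ 2 * K)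
  have ht_ne : t ≠ 0 := ht0.ne'
  have hK : (catalan K : ℝ) ≠ 0 := by exact_mod_cast (catalan_pos K).ne'
  rw [h_sum.tsum_eq, add_sub_cancel_left]
  -- `field_simp` looks for the side condition in its own normal form `1 - K * 2 ≠ 0`
  ring_nf at h_odd
  field_simp
end

section
/- One has ∑_{n≥0} (Cat_n)² · 16^{−n} = 16/π − 4. -/
open Real Filter Finset Topology Nat

private lemma cb_sq_eq (N : ℕ) :
    ((Nat.centralBinom N : ℝ)) ^ 2 * ((16 : ℝ) ^ N)⁻¹ =
      ((2 * N + 1 : ℝ) * Real.Wallis.W N)⁻¹ := by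
  have hW := Real.Wallis.W_eq_factorial_ratio N
  have hnat : Nat.centralBinom N * N ! * N ! = (2 * N)! := by
    have h := Nat.choose_mul_factorial_mul_factorial (show N ≤ 2 * N by omega)
    rw [show 2 * N - N = N from by omega] at h
    rw [Nat.centralBinom]
    exact h
  have hfact : (Nat.centralBinom N : ℝ) * (N ! : ℝ) * (N ! : ℝ) = ((2 * N)! : ℝ) := by
    exact_mod_cast congrArg (Nat.cast (R := ℝ)) hnat
  have h16 : ((2 : ℝ)) ^ (4 * N) = 16 ^ N := by
    rw [pow_mul]; norm_num
  have hWpos := Real.Wallis.W_pos N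
  have hne1 : ((2 * N)! : ℝ) ≠ 0 := by positivity
  have hne2 : (N ! : ℝ) ≠ 0 := by positivity
  have h2N1 : (0:ℝ) < 2 * N + 1 := by positivity
  have key : ((2 * N + 1 : ℝ) * Real.Wallis.W N) *
      ((Nat.centralBinom N : ℝ) ^ 2 * ((16 : ℝ) ^ N)⁻¹) = 1 := by
    rw [hW, h16]
    field_simp
    rw [← hfact]; ring
  exact (inv_eq_of_mul_eq_one_right key).symm

private lemma partial_sum_eq (N : ℕ) :
    ∑ n ∈ Finset.range N, (catalan n : ℝ) ^ 2 * ((16 : ℝ) ^ n)⁻¹ =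
      (16 * N + 4) * (Nat.centralBinom N : ℝ) ^ 2 * ((16 : ℝ) ^ N)⁻¹ - 4 := by
  induction N with
  | zero => simp [Nat.centralBinom]
  | succ N ih =>
      rw [Finset.sum_range_succ, ih]
      have h1 : ((N : ℝ) + 1) * (catalan N : ℝ) = (Nat.centralBinom N : ℝ) := by
        exact_mod_cast congrArg (Nat.cast (R := ℝ)) (succ_mul_catalan_eq_centralBinom N)
      have h2 : ((N : ℝ) + 1) * (Nat.centralBinom (N + 1) : ℝ)
          = 2 * (2 * N + 1) * (Nat.centralBinom N : ℝ) := by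
        exact_mod_cast congrArg (Nat.cast (R := ℝ)) (Nat.succ_mul_centralBinom_succ N)
      have hN1 : ((N : ℝ) + 1) ≠ 0 := by positivity
      have hcat : (catalan N : ℝ) = (Nat.centralBinom N : ℝ) / ((N : ℝ) + 1) := by
        field_simp; linarith [h1]
      have hcb : (Nat.centralBinom (N + 1) : ℝ)
          = 2 * (2 * N + 1) * (Nat.centralBinom N : ℝ) / ((N : ℝ) + 1) := by
        field_simp; linarith [h2]
      have h16 : ((16 : ℝ)) ^ N ≠ 0 := by positivity
      rw [hcat, hcb]
      push_cast
      field_simp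
      ring

private lemma limit_lemma :
    Tendsto (fun N : ℕ => (16 * N + 4) * (Nat.centralBinom N : ℝ) ^ 2 * ((16 : ℝ) ^ N)⁻¹ - 4)
      atTop (𝓝 (16 / π - 4)) := by
  have key : ∀ N : ℕ, (16 * N + 4) * (Nat.centralBinom N : ℝ) ^ 2 * ((16 : ℝ) ^ N)⁻¹
      = (8 - 4 / (2 * N + 1)) * (Real.Wallis.W N)⁻¹ := by
    intro N
    have h := cb_sq_eq N
    have hWpos := Real.Wallis.W_pos N
    have h1 : (0 : ℝ) < 2 * N + 1 := by positivity
    rw [mul_assoc, h, mul_inv]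
    field_simp
    ring
  simp only [key]
  have hW : Tendsto (fun N : ℕ => (Real.Wallis.W N)⁻¹) atTop (𝓝 ((π / 2)⁻¹)) :=
    (Real.Wallis.tendsto_W_nhds_pi_div_two).inv₀ (by positivity)
  have h2 : Tendsto (fun N : ℕ => (8 : ℝ) - 4 / (2 * N + 1)) atTop (𝓝 8) := by
    have : Tendsto (fun N : ℕ => (4 : ℝ) / (2 * N + 1)) atTop (𝓝 0) := by
      apply tendsto_const_nhds.div_atTop
      apply Tendsto.atTop_add _ tendsto_const_nhds
      exact tendsto_natCast_atTop_atTop.const_mul_atTop two_pos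
    simpa using tendsto_const_nhds.sub this
  have := (h2.mul hW).sub (tendsto_const_nhds (x := (4 : ℝ)))
  have hval : (8 : ℝ) * (π / 2)⁻¹ - 4 = 16 / π - 4 := by
    rw [inv_div]; ring
  rw [hval] at this
  exact this

/-- `∑ₙ Catₙ² · 16⁻ⁿ = 16/π − 4`. -/
theorem stmt_5 :
    ∑' n : ℕ, (catalan n : ℝ) ^ 2 * ((16 : ℝ) ^ n)⁻¹ = 16 / π - 4 := by
  have hs : HasSum (fun n : ℕ => (catalan n : ℝ) ^ 2 * ((16 : ℝ) ^ n)⁻¹) (16 / π - 4) := by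
    rw [hasSum_iff_tendsto_nat_of_nonneg (fun n => by positivity)]
    simpa only [partial_sum_eq] using limit_lemma
  exact hs.tsum_eq
end

section
/- One has ∑_{(x₁,x₂) ∈ ℕ²} Cat_{x₁} · Cat_{x₁+x₂} · (1/4)^{2x₁+x₂} = 8/π. -/
/-!
Put `b n = C(2n, n) / 4ⁿ` and `c n = Cat_n / 4ⁿ`. Since `(n + 1) Cat_n = C(2n, n)`, one has
`c n = 2 (b n - b (n + 1))`, so the inner sum over `x₂` telescopes to `∑_{m ≥ n} c m = 2 b n`
(Wallis' product forces `b n → 0`). The outer summand `c n · 2 b n` equals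
`8 (n + 1) b (n + 1)² - 8 n b n²` and telescopes as well, to `lim 8 N b N²`; Wallis' product in the
form `(2N + 1) b N² → 2 / π` identifies this limit as `8 / π`.
-/

open Real Filter Topology

theorem hasSum_sub_of_monotone_of_tendsto {u : ℕ → ℝ} {l : ℝ} (hu : Monotone u)
    (hl : Tendsto u atTop (𝓝 l)) : HasSum (fun n => u (n + 1) - u n) (l - u 0) := by
  rw [hasSum_iff_tendsto_nat_of_nonneg (fun n => sub_nonneg.2 (hu n.le_succ))]
  simp only [Finset.sum_range_sub]
  exact hl.sub_const _

theorem HasSum.prod_of_nonneg {α β : Type*} {f : α × β → ℝ} (hf : 0 ≤ f) {g : α → ℝ} {a : ℝ}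
    (hfib : ∀ x, HasSum (fun y => f (x, y)) (g x)) (hg : HasSum g a) : HasSum f a := by
  have hsum : Summable f :=
    (summable_prod_of_nonneg hf).2 ⟨fun x => (hfib x).summable,
      hg.summable.congr fun x => ((hfib x).tsum_eq).symm⟩
  convert hsum.hasSum
  exact (hsum.hasSum.prod_fiberwise hfib).unique hg |>.symm

noncomputable def scaledCentralBinom (n : ℕ) : ℝ := n.centralBinom / 4 ^ n

noncomputable def scaledCatalan (n : ℕ) : ℝ := catalan n / 4 ^ n

theorem scaledCentralBinom_nonneg (n : ℕ) : 0 ≤ scaledCentralBinom n := by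
  unfold scaledCentralBinom; positivity

theorem scaledCentralBinom_succ (n : ℕ) :
    scaledCentralBinom (n + 1) = scaledCentralBinom n * ((2 * n + 1) / (2 * n + 2)) := by
  have h : ((n : ℝ) + 1) * (n + 1).centralBinom = 2 * (2 * n + 1) * n.centralBinom := by
    exact_mod_cast Nat.succ_mul_centralBinom_succ n
  unfold scaledCentralBinom
  rw [pow_succ]
  field_simp
  linear_combination 2 * h

theorem two_mul_add_one_mul_scaledCentralBinom_sq (n : ℕ) :
    (2 * n + 1) * scaledCentralBinom n ^ 2 = (Wallis.W n)⁻¹ := by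
  have hfact : (n.centralBinom : ℝ) * (n.factorial * n.factorial) = (2 * n).factorial := by
    have := Nat.choose_mul_factorial_mul_factorial (show n ≤ 2 * n by omega)
    rw [show 2 * n - n = n by omega, ← Nat.centralBinom_eq_two_mul_choose] at this
    exact_mod_cast (mul_assoc _ _ _).symm.trans this
  have hpow : (2 : ℝ) ^ (4 * n) = (4 ^ n) ^ 2 := by
    rw [← pow_mul, show (4 : ℝ) = 2 ^ 2 by norm_num, ← pow_mul]
    ring_nf
  rw [Wallis.W_eq_factorial_ratio, scaledCentralBinom, ← hfact, hpow]
  field_simp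

theorem tendsto_two_mul_add_one_mul_scaledCentralBinom_sq :
    Tendsto (fun n : ℕ => (2 * n + 1) * scaledCentralBinom n ^ 2) atTop (𝓝 (2 / π)) := by
  simp_rw [two_mul_add_one_mul_scaledCentralBinom_sq]
  simpa only [inv_div] using Wallis.tendsto_W_nhds_pi_div_two.inv₀ (by positivity)

theorem tendsto_scaledCentralBinom_sq :
    Tendsto (fun n => scaledCentralBinom n ^ 2) atTop (𝓝 0) := by
  have h : Tendsto (fun n : ℕ => (2 * (n : ℝ) + 1)⁻¹) atTop (𝓝 0) :=
    tendsto_inv_atTop_zero.comp <| tendsto_atTop_add_const_right _ _ <|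
      tendsto_natCast_atTop_atTop.const_mul_atTop two_pos
  have := tendsto_two_mul_add_one_mul_scaledCentralBinom_sq.mul h
  rw [mul_zero] at this
  convert this using 2 with n
  field_simp

theorem tendsto_scaledCentralBinom : Tendsto scaledCentralBinom atTop (𝓝 0) := by
  simpa [Real.sqrt_sq (scaledCentralBinom_nonneg _)] using tendsto_scaledCentralBinom_sq.sqrt

theorem scaledCatalan_nonneg (n : ℕ) : 0 ≤ scaledCatalan n := by unfold scaledCatalan; positivity

theorem scaledCatalan_eq_two_mul_sub (n : ℕ) :
    scaledCatalan n = 2 * (scaledCentralBinom n - scaledCentralBinom (n + 1)) := by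
  have h : ((n : ℝ) + 1) * catalan n = n.centralBinom := by
    exact_mod_cast succ_mul_catalan_eq_centralBinom n
  rw [scaledCentralBinom_succ, scaledCatalan, scaledCentralBinom]
  field_simp
  linear_combination h

theorem hasSum_scaledCatalan_add (n : ℕ) :
    HasSum (fun m => scaledCatalan (n + m)) (2 * scaledCentralBinom n) := by
  have hsub (m : ℕ) : scaledCatalan (n + m) =
      -2 * scaledCentralBinom (n + (m + 1)) - -2 * scaledCentralBinom (n + m) := by
    rw [scaledCatalan_eq_two_mul_sub, ← add_assoc]; ring
  have hmono : Monotone fun m => -2 * scaledCentralBinom (n + m) :=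
    monotone_nat_of_le_succ fun m => sub_nonneg.1 <| hsub m ▸ scaledCatalan_nonneg _
  have hlim : Tendsto (fun m => -2 * scaledCentralBinom (n + m)) atTop (𝓝 0) := by
    simpa [add_comm n] using
      (tendsto_scaledCentralBinom.comp (tendsto_add_atTop_nat n)).const_mul (-2)
  simpa [hsub] using hasSum_sub_of_monotone_of_tendsto hmono hlim

theorem scaledCatalan_mul_eq_sub (n : ℕ) :
    scaledCatalan n * (2 * scaledCentralBinom n) =
      8 * (n + 1 : ℕ) * scaledCentralBinom (n + 1) ^ 2 - 8 * n * scaledCentralBinom n ^ 2 := by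
  rw [scaledCatalan_eq_two_mul_sub, scaledCentralBinom_succ]
  push_cast
  field_simp
  ring

theorem hasSum_scaledCatalan_mul :
    HasSum (fun n => scaledCatalan n * (2 * scaledCentralBinom n)) (8 / π) := by
  have hmono : Monotone fun n : ℕ => 8 * n * scaledCentralBinom n ^ 2 :=
    monotone_nat_of_le_succ fun n => sub_nonneg.1 <| scaledCatalan_mul_eq_sub n ▸
      mul_nonneg (scaledCatalan_nonneg n) (mul_nonneg zero_le_two (scaledCentralBinom_nonneg n))
  have hlim : Tendsto (fun n : ℕ => 8 * n * scaledCentralBinom n ^ 2) atTop (𝓝 (8 / π)) := by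
    convert (tendsto_two_mul_add_one_mul_scaledCentralBinom_sq.const_mul 4).sub
      (tendsto_scaledCentralBinom_sq.const_mul 4) using 2 <;> ring
  simpa [scaledCatalan_mul_eq_sub] using hasSum_sub_of_monotone_of_tendsto hmono hlim

/-- `∑_{x₁,x₂} Cat_{x₁} Cat_{x₁+x₂} (1/4)^{2x₁+x₂} = 8/π`. -/
theorem stmt_6 :
    ∑' x : ℕ × ℕ,
      (catalan x.1 : ℝ) * (catalan (x.1 + x.2) : ℝ) * (1 / 4 : ℝ) ^ (2 * x.1 + x.2) = 8 / π := by
  have hterm (x : ℕ × ℕ) : (catalan x.1 : ℝ) * (catalan (x.1 + x.2) : ℝ) *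
      (1 / 4 : ℝ) ^ (2 * x.1 + x.2) = scaledCatalan x.1 * scaledCatalan (x.1 + x.2) := by
    rw [scaledCatalan, scaledCatalan, two_mul, add_assoc, pow_add, one_div_pow, one_div_pow]
    field_simp
  simp_rw [hterm]
  refine (HasSum.prod_of_nonneg (fun x => ?_) (fun n => ?_) hasSum_scaledCatalan_mul).tsum_eq
  · exact mul_nonneg (scaledCatalan_nonneg _) (scaledCatalan_nonneg _)
  · exact (hasSum_scaledCatalan_add n).mul_left _
end

section
/- One has ∑_{(x₁,x₂) ∈ ℕ²} Cat_{x₁} · Cat_{x₂} · Cat_{x₁+x₂} · (1/4)^{2(x₁+x₂)} = 8 − 64/(3π). -/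
/-!
Grouping the pairs by `n = x₁ + x₂`, Segner's recurrence `∑_{i+j=n} Cat_i Cat_j = Cat_{n+1}`
turns the double series into `∑ₙ Cat_n Cat_{n+1} / 16ⁿ`. With the Wallis products
`W_n → π/2`, for which `1 / W_n = (2n+1) (binom(2n,n) / 4ⁿ)²`, the n-th term is
`2 / ((n+1)² (n+2) W_n)`, and this telescopes as `T_n - T_{n+1}` for
`T_n = 8 (4n+3) / (3 (n+1) W_n)`. So the sum is `T_0 - lim T_n = 8 - 64/(3π)`.
-/

open Real Finset Filter Topology Real.Wallis

theorem HasSum.of_sum_antidiagonal_of_nonneg {A : Type*} [AddMonoid A] [HasAntidiagonal A]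
    {f : A × A → ℝ} (hf : 0 ≤ f) {a : ℝ}
    (h : HasSum (fun n ↦ ∑ p ∈ antidiagonal n, f p) a) : HasSum f a := by
  let e := HasAntidiagonal.sigmaAntidiagonalEquivProd (A := A)
  have hfiber (n : A) : ∑' p : antidiagonal n, f (e ⟨n, p⟩) = ∑ p ∈ antidiagonal n, f p :=
    Finset.tsum_subtype (antidiagonal n) f
  have hs : Summable (f ∘ e) := (summable_sigma_of_nonneg fun _ ↦ hf _).2
    ⟨fun _ ↦ (hasSum_fintype _).summable, by simpa only [hfiber] using h.summable⟩
  rw [← e.hasSum_iff]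
  convert hs.hasSum
  rw [hs.tsum_sigma, ← h.tsum_eq]
  exact (tsum_congr hfiber).symm

theorem hasSum_sub_succ_of_antitone {T : ℕ → ℝ} (hT : Antitone T) {l : ℝ}
    (hl : Tendsto T atTop (𝓝 l)) : HasSum (fun n ↦ T n - T (n + 1)) (T 0 - l) := by
  rw [hasSum_iff_tendsto_nat_of_nonneg (fun n ↦ sub_nonneg.2 (hT n.le_succ))]
  simpa only [sum_range_sub'] using tendsto_const_nhds.sub hl

theorem cast_catalan_eq_centralBinom_div {K : Type*} [DivisionRing K] [CharZero K] (n : ℕ) :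
    (catalan n : K) = n.centralBinom / (n + 1) := by
  rw [eq_div_iff n.cast_add_one_ne_zero, ← Nat.cast_succ, ← Nat.cast_mul, mul_comm,
    succ_mul_catalan_eq_centralBinom]

theorem cast_centralBinom_succ {K : Type*} [DivisionRing K] [CharZero K] (n : ℕ) :
    ((n + 1).centralBinom : K) = 2 * (2 * n + 1) * n.centralBinom / (n + 1) := by
  rw [eq_div_iff n.cast_add_one_ne_zero, ← Nat.cast_succ]
  exact_mod_cast (mul_comm _ _).trans (Nat.succ_mul_centralBinom_succ n)

theorem Real.Wallis.W_inv_eq_centralBinom (n : ℕ) :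
    (W n)⁻¹ = (2 * n + 1) * (n.centralBinom / 4 ^ n) ^ 2 := by
  induction n with
  | zero => simp [W]
  | succ n ih =>
    rw [W_succ, mul_inv, ih, cast_centralBinom_succ]
    field_simp
    push_cast
    ring

theorem catalan_mul_catalan_succ_div_sixteen_pow (n : ℕ) :
    (catalan n : ℝ) * catalan (n + 1) / 16 ^ n = 2 / ((n + 1) ^ 2 * (n + 2)) * (W n)⁻¹ := by
  have h16 : (16 : ℝ) ^ n = (4 ^ n) ^ 2 := by rw [← pow_mul, mul_comm, pow_mul]; norm_num
  rw [W_inv_eq_centralBinom, cast_catalan_eq_centralBinom_div, cast_catalan_eq_centralBinom_div,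
    cast_centralBinom_succ, h16]
  field_simp
  push_cast
  ring

noncomputable def catalanProductTail (n : ℕ) : ℝ := 8 * (4 * n + 3) / (3 * (n + 1) * W n)

theorem catalanProductTail_sub_succ (n : ℕ) :
    catalanProductTail n - catalanProductTail (n + 1) = catalan n * catalan (n + 1) / 16 ^ n := by
  rw [catalan_mul_catalan_succ_div_sixteen_pow, catalanProductTail, catalanProductTail, W_succ]
  have hW := W_pos n
  field_simp
  push_cast
  ring

theorem catalanProductTail_zero : catalanProductTail 0 = 8 := by
  norm_num [catalanProductTail, W]

theorem antitone_catalanProductTail : Antitone catalanProductTail :=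
  antitone_nat_of_succ_le fun n ↦ sub_nonneg.1 <| by
    rw [catalanProductTail_sub_succ]; positivity

theorem tendsto_catalanProductTail : Tendsto catalanProductTail atTop (𝓝 (64 / (3 * π))) := by
  have h := ((tendsto_add_mul_div_add_mul_atTop_nhds (3 : ℝ) 1 4 one_ne_zero).const_mul
    (8 / 3)).mul (tendsto_W_nhds_pi_div_two.inv₀ pi_div_two_pos.ne')
  convert h using 1
  · ext n
    have hW := W_pos n
    rw [catalanProductTail]
    field_simp
    ring
  · congr 1
    ring

theorem hasSum_catalan_mul_catalan_succ_div_sixteen_pow :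
    HasSum (fun n ↦ (catalan n : ℝ) * catalan (n + 1) / 16 ^ n) (8 - 64 / (3 * π)) := by
  simpa only [catalanProductTail_sub_succ, catalanProductTail_zero] using
    hasSum_sub_succ_of_antitone antitone_catalanProductTail tendsto_catalanProductTail

theorem sum_antidiagonal_catalan_mul_catalan_mul_catalan_add (n : ℕ) :
    ∑ p ∈ antidiagonal n, (catalan p.1 : ℝ) * catalan p.2 * catalan (p.1 + p.2) *
      (1 / 4 : ℝ) ^ (2 * (p.1 + p.2)) = catalan n * catalan (n + 1) / 16 ^ n := by
  have h (p) (hp : p ∈ antidiagonal n) : (catalan p.1 : ℝ) * catalan p.2 * catalan (p.1 + p.2) *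
      (1 / 4 : ℝ) ^ (2 * (p.1 + p.2)) = catalan p.1 * catalan p.2 * (catalan n / 16 ^ n) := by
    rw [mem_antidiagonal.1 hp, pow_mul, show (1 / 4 : ℝ) ^ 2 = 1 / 16 by norm_num, one_div_pow]
    ring
  rw [sum_congr rfl h, ← sum_mul, catalan_succ']
  push_cast
  ring

/-- `∑_{x₁,x₂} Cat_{x₁} Cat_{x₂} Cat_{x₁+x₂} (1/4)^{2(x₁+x₂)} = 8 − 64/(3π)`. -/
theorem stmt_7 :
    ∑' x : ℕ × ℕ,
      (catalan x.1 : ℝ) * (catalan x.2 : ℝ) * (catalan (x.1 + x.2) : ℝ) *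
        (1 / 4 : ℝ) ^ (2 * (x.1 + x.2)) = 8 - 64 / (3 * π) := by
  refine (HasSum.of_sum_antidiagonal_of_nonneg (fun _ ↦ by positivity) ?_).tsum_eq
  simpa only [sum_antidiagonal_catalan_mul_catalan_mul_catalan_add] using
    hasSum_catalan_mul_catalan_succ_div_sixteen_pow
end

section
/- For every real t with 0 < t ≤ 1/4, one has ∑_{(x₁,x₂,x₃) ∈ ℕ³} Cat_{x₁+x₂} · Cat_{x₂+x₃} · Cat_{x₃+x₁} · t^{2(x₁+x₂+x₃)} = ((1−4t)^{3/2} − (1+4t)^{3/2} + 12t)/(8t³). In particular, at t = 1/4 the sum equals 24 − 16√2. -/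
/-!
Group the triples by `n = x₁ + x₂ + x₃`. With `u = x₂ + x₃` fixed, the other two factors
`Cat_{x₁+x₂} Cat_{x₁+x₃}` run over the middle window of the Catalan convolution of length
`u + 2x₁`, whose full sum is `Cat_{u+2x₁+1}`; removing the two symmetric tails and re-summing them
as a triple convolution gives `2 S(n) + Cat_{2n+2} = 4 Cat_{2n+1}` for the fiber sum `S(n)`.
The series is therefore a combination of the even and odd parts of the Catalan generating function
`c(y) = ∑ Cat_n y^{n+1} = (1 - √(1 - 4y)) / 2` at `y = ±t`. This closed form holds on the whole
closed disc `|y| ≤ 1/4`: `c = y + c²` keeps the partial sums of `∑ Cat_n |y|^{n+1}` below `1/2`,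
which gives convergence and selects the root with `1 - 2c ≥ 0`.
-/

open Finset

theorem sum_antidiagonal_add_two_mul {M : Type*} [AddCommMonoid M] (F : ℕ → ℕ → M) (u a : ℕ) :
    ∑ p ∈ antidiagonal (u + 2 * a), F p.1 p.2 =
      ∑ p ∈ antidiagonal u, F (p.1 + a) (p.2 + a) +
        ∑ i ∈ range a, (F i (u + 2 * a - i) + F (u + 2 * a - i) i) := by
  induction a generalizing F with
  | zero => simp
  | succ a ih =>
    have tails : ∀ i ∈ range a,
        F (i + 1) (u + 2 * a + 1 + 1 - (i + 1)) + F (u + 2 * a + 1 + 1 - (i + 1)) (i + 1) =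
          F (i + 1) (u + 2 * a - i + 1) + F (u + 2 * a - i + 1) (i + 1) := by
      intro i hi
      rw [mem_range] at hi
      rw [show u + 2 * a + 1 + 1 - (i + 1) = u + 2 * a - i + 1 by omega]
    rw [show u + 2 * (a + 1) = u + 2 * a + 1 + 1 by ring, Nat.sum_antidiagonal_succ,
      Nat.sum_antidiagonal_succ', ih fun i j => F (i + 1) (j + 1), sum_range_succ',
      sum_congr rfl tails]
    simp only [add_assoc, Nat.sub_zero]
    abel

theorem catalan_add_two_mul_succ (u a : ℕ) :
    catalan (u + 2 * a + 1) =
      ∑ p ∈ antidiagonal u, catalan (p.1 + a) * catalan (p.2 + a) +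
        2 * ∑ i ∈ range a, catalan i * catalan (u + 2 * a - i) := by
  rw [catalan_succ', sum_antidiagonal_add_two_mul (fun i j => catalan i * catalan j), mul_sum]
  congr 1
  exact sum_congr rfl fun i _ => by ring

theorem two_mul_sum_range_catalan (n : ℕ) :
    2 * ∑ i ∈ range (n + 1), catalan i * catalan (2 * n + 1 - i) = catalan (2 * n + 2) := by
  have h := catalan_add_two_mul_succ 1 n
  rw [show 1 + 2 * n = 2 * n + 1 by ring] at h
  rw [h, sum_range_succ, show 2 * n + 1 - n = n + 1 by omega, Nat.sum_antidiagonal_succ,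
    Nat.antidiagonal_zero, sum_singleton, zero_add, zero_add, add_comm 1 n]
  ring

theorem sum_catalan_tails_add_catalan (n : ℕ) :
    ∑ p ∈ antidiagonal n, catalan p.2 * ∑ i ∈ range p.1, catalan i * catalan (p.2 + 2 * p.1 - i)
      + catalan (2 * n + 1) = ∑ p ∈ antidiagonal n, catalan p.2 * catalan (p.2 + 2 * p.1 + 1) := by
  cases n with
  | zero => simp
  | succ m =>
    rw [Nat.sum_antidiagonal_succ, Nat.sum_antidiagonal_succ']
    simp only [range_zero, sum_empty, mul_zero, zero_add, catalan_zero, one_mul]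
    rw [add_comm]
    congr 1
    have expand : ∀ p ∈ antidiagonal m, catalan (p.2 + 1) * catalan (p.2 + 1 + 2 * p.1 + 1) =
        ∑ q ∈ antidiagonal p.2, catalan q.1 * catalan q.2 * catalan (p.2 + 2 * p.1 + 2) := by
      intro p _
      rw [catalan_succ', sum_mul, show p.2 + 1 + 2 * p.1 + 1 = p.2 + 2 * p.1 + 2 by ring]
    rw [sum_congr rfl expand]
    simp_rw [mul_sum, sum_sigma']
    -- Both sides are the sum of `Cat_u Cat_i Cat_{m + 2 + a - i}` over `a + u = m`, `i ≤ a`.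
    refine sum_nbij' (fun x => ⟨(x.1.1 - x.2, x.1.2 + x.2), (x.1.2, x.2)⟩)
      (fun x => ⟨(x.1.1 + x.2.2, x.2.1), x.2.2⟩) ?_ ?_ ?_ ?_ ?_
    · rintro ⟨⟨a, u⟩, i⟩ h
      simp only [mem_sigma, HasAntidiagonal.mem_antidiagonal, mem_range, and_true] at h ⊢
      omega
    · rintro ⟨⟨a, u⟩, i, j⟩ h
      simp only [mem_sigma, HasAntidiagonal.mem_antidiagonal, mem_range] at h ⊢
      omega
    · rintro ⟨⟨a, u⟩, i⟩ h
      simp only [mem_sigma, HasAntidiagonal.mem_antidiagonal, mem_range] at h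
      simp only [Sigma.mk.injEq, Prod.mk.injEq, heq_eq_eq, and_true]
      omega
    · rintro ⟨⟨a, u⟩, i, j⟩ h
      simp only [mem_sigma, HasAntidiagonal.mem_antidiagonal] at h
      simp only [Sigma.mk.injEq, Prod.mk.injEq, heq_eq_eq, and_true]
      omega
    · rintro ⟨⟨a, u⟩, i⟩ h
      simp only [mem_sigma, HasAntidiagonal.mem_antidiagonal, mem_range] at h
      rw [show u + i + 2 * (a - i) + 2 = u + 2 * (a + 1) - i by omega, mul_assoc]

def antidiagonalTriple (n : ℕ) : Finset (ℕ × ℕ × ℕ) :=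
  (range (n + 1) ×ˢ range (n + 1) ×ˢ range (n + 1)).filter fun p => p.1 + p.2.1 + p.2.2 = n

theorem mem_antidiagonalTriple {n : ℕ} {p : ℕ × ℕ × ℕ} :
    p ∈ antidiagonalTriple n ↔ p.1 + p.2.1 + p.2.2 = n := by
  simp only [antidiagonalTriple, mem_filter, mem_product, mem_range, and_iff_right_iff_imp]
  omega

theorem sum_antidiagonalTriple {M : Type*} [AddCommMonoid M] (f : ℕ → ℕ × ℕ → M) (n : ℕ) :
    ∑ p ∈ antidiagonalTriple n, f p.1 p.2 =
      ∑ p ∈ antidiagonal n, ∑ q ∈ antidiagonal p.2, f p.1 q := by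
  rw [sum_finset_product' _ (range (n + 1)) fun a => antidiagonal (n - a),
    Nat.sum_antidiagonal_eq_sum_range_succ_mk]
  intro p
  simp only [mem_antidiagonalTriple, mem_range, HasAntidiagonal.mem_antidiagonal]
  omega

theorem sum_antidiagonalTriple_catalan (n : ℕ) :
    ∑ p ∈ antidiagonalTriple n,
        catalan (p.1 + p.2.1) * catalan (p.2.1 + p.2.2) * catalan (p.2.2 + p.1) =
      ∑ p ∈ antidiagonal n,
        catalan p.2 * ∑ q ∈ antidiagonal p.2, catalan (q.1 + p.1) * catalan (q.2 + p.1) := by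
  rw [sum_antidiagonalTriple fun a q =>
    catalan (a + q.1) * catalan (q.1 + q.2) * catalan (q.2 + a)]
  refine sum_congr rfl fun p _ => ?_
  rw [mul_sum]
  refine sum_congr rfl fun q hq => ?_
  rw [HasAntidiagonal.mem_antidiagonal.mp hq, add_comm p.1]
  ring

theorem two_mul_sum_antidiagonal_catalan (n : ℕ) :
    2 * ∑ p ∈ antidiagonal n, catalan p.2 * catalan (p.2 + 2 * p.1 + 1) = catalan (2 * n + 2) := by
  rw [← Nat.sum_antidiagonal_swap, Nat.sum_antidiagonal_eq_sum_range_succ_mk,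
    ← two_mul_sum_range_catalan]
  congr 1
  refine sum_congr rfl fun k hk => ?_
  rw [mem_range] at hk
  simp only [Prod.fst_swap, Prod.snd_swap]
  rw [show k + 2 * (n - k) + 1 = 2 * n + 1 - k by omega]

theorem two_mul_sum_antidiagonalTriple_catalan_add (n : ℕ) :
    2 * ∑ p ∈ antidiagonalTriple n,
        catalan (p.1 + p.2.1) * catalan (p.2.1 + p.2.2) * catalan (p.2.2 + p.1) +
      catalan (2 * n + 2) = 4 * catalan (2 * n + 1) := by
  have window : ∑ p ∈ antidiagonalTriple n,
        catalan (p.1 + p.2.1) * catalan (p.2.1 + p.2.2) * catalan (p.2.2 + p.1) +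
      2 * ∑ p ∈ antidiagonal n,
        catalan p.2 * ∑ i ∈ range p.1, catalan i * catalan (p.2 + 2 * p.1 - i) =
      ∑ p ∈ antidiagonal n, catalan p.2 * catalan (p.2 + 2 * p.1 + 1) := by
    rw [sum_antidiagonalTriple_catalan, mul_sum, ← sum_add_distrib]
    refine sum_congr rfl fun p _ => ?_
    rw [catalan_add_two_mul_succ]
    ring
  have := sum_catalan_tails_add_catalan n
  have := two_mul_sum_antidiagonal_catalan n
  omega

theorem sum_antidiagonalTriple_catalan_mul_pow (t : ℝ) (n : ℕ) :
    ∑ p ∈ antidiagonalTriple n, (catalan (p.1 + p.2.1) : ℝ) * catalan (p.2.1 + p.2.2) *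
        catalan (p.2.2 + p.1) * t ^ (2 * (p.1 + p.2.1 + p.2.2)) =
      (2 * catalan (2 * n + 1) - catalan (2 * n + 2) / 2) * t ^ (2 * n) := by
  have key : (2 * ∑ p ∈ antidiagonalTriple n, (catalan (p.1 + p.2.1) : ℝ) *
      catalan (p.2.1 + p.2.2) * catalan (p.2.2 + p.1) + catalan (2 * n + 2) : ℝ) =
      4 * catalan (2 * n + 1) := by
    exact_mod_cast two_mul_sum_antidiagonalTriple_catalan_add n
  rw [sum_congr rfl fun p hp => by rw [mem_antidiagonalTriple.mp hp], ← sum_mul]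
  congr 1
  linarith

theorem Real.rpow_three_halves {x : ℝ} (hx : 0 ≤ x) : x ^ (3 / 2 : ℝ) = x * √x := by
  rw [show (3 / 2 : ℝ) = 1 + 1 / 2 by norm_num, Real.rpow_add' hx (by norm_num), Real.rpow_one,
    Real.sqrt_eq_rpow]

theorem sum_range_sum_antidiagonal_mul_le_sq {R : Type*} [CommSemiring R] [PartialOrder R]
    [IsOrderedRing R] {a : ℕ → R} (ha : ∀ n, 0 ≤ a n) (N : ℕ) :
    ∑ n ∈ range N, ∑ p ∈ antidiagonal n, a p.1 * a p.2 ≤ (∑ i ∈ range N, a i) ^ 2 := by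
  simp_rw [Nat.sum_antidiagonal_eq_sum_range_succ_mk, Nat.succ_eq_add_one]
  rw [sum_range_diag_flip N fun i j => a i * a j, sq, sum_mul_sum]
  gcongr with i
  · exact fun j _ _ => mul_nonneg (ha i) (ha j)
  · exact Nat.sub_le N i

theorem catalan_succ_mul_pow (y : ℝ) (n : ℕ) :
    (catalan (n + 1) : ℝ) * y ^ (n + 1 + 1) =
      ∑ p ∈ antidiagonal n, (catalan p.1 * y ^ (p.1 + 1)) * (catalan p.2 * y ^ (p.2 + 1)) := by
  rw [catalan_succ', Nat.cast_sum, sum_mul]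
  refine sum_congr rfl fun p hp => ?_
  rw [← HasAntidiagonal.mem_antidiagonal.mp hp]
  push_cast
  ring

theorem sum_range_catalan_mul_pow_le {y : ℝ} (hy₀ : 0 ≤ y) (hy : y ≤ 1 / 4) (N : ℕ) :
    ∑ n ∈ range N, (catalan n : ℝ) * y ^ (n + 1) ≤ 1 / 2 := by
  induction N with
  | zero => norm_num
  | succ N ih =>
    have hpos : 0 ≤ ∑ n ∈ range N, (catalan n : ℝ) * y ^ (n + 1) := by positivity
    calc ∑ n ∈ range (N + 1), (catalan n : ℝ) * y ^ (n + 1)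
        = ∑ n ∈ range N, ∑ p ∈ antidiagonal n,
            (catalan p.1 * y ^ (p.1 + 1)) * (catalan p.2 * y ^ (p.2 + 1)) + y := by
          simp [sum_range_succ', catalan_succ_mul_pow]
      _ ≤ (∑ n ∈ range N, (catalan n : ℝ) * y ^ (n + 1)) ^ 2 + y := by
          gcongr
          exact sum_range_sum_antidiagonal_mul_le_sq (a := fun n => catalan n * y ^ (n + 1))
            (fun n => by positivity) N
      _ ≤ 1 / 2 := by nlinarith

theorem summable_norm_catalan_mul_pow {y : ℝ} (hy : |y| ≤ 1 / 4) :
    Summable fun n => ‖(catalan n : ℝ) * y ^ (n + 1)‖ := by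
  simp only [norm_mul, norm_pow, Real.norm_eq_abs, Nat.abs_cast]
  exact summable_of_sum_range_le (fun n => by positivity)
    (sum_range_catalan_mul_pow_le (abs_nonneg y) hy)

theorem tsum_norm_catalan_mul_pow_le {y : ℝ} (hy : |y| ≤ 1 / 4) :
    ∑' n, ‖(catalan n : ℝ) * y ^ (n + 1)‖ ≤ 1 / 2 := by
  simp only [norm_mul, norm_pow, Real.norm_eq_abs, Nat.abs_cast]
  exact Real.tsum_le_of_sum_range_le (fun n => by positivity)
    (sum_range_catalan_mul_pow_le (abs_nonneg y) hy)

theorem hasSum_catalan_mul_pow {y : ℝ} (hy : |y| ≤ 1 / 4) :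
    HasSum (fun n => (catalan n : ℝ) * y ^ (n + 1)) ((1 - √(1 - 4 * y)) / 2) := by
  have hnorm := summable_norm_catalan_mul_pow hy
  set g := ∑' n, (catalan n : ℝ) * y ^ (n + 1) with hg_def
  have hsq : g ^ 2 = g - y := by
    rw [hg_def, sq, tsum_mul_tsum_eq_tsum_sum_antidiagonal_of_summable_norm hnorm hnorm,
      ← tsum_congr (catalan_succ_mul_pow y), hnorm.of_norm.tsum_eq_zero_add]
    simp
  have hg : g ≤ 1 / 2 :=
    (le_abs_self g).trans ((norm_tsum_le_tsum_norm hnorm).trans (tsum_norm_catalan_mul_pow_le hy))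
  have hsqrt : √(1 - 4 * y) = 1 - 2 * g := by
    rw [show 1 - 4 * y = (1 - 2 * g) ^ 2 by linear_combination -4 * hsq]
    exact Real.sqrt_sq (by linarith)
  rw [hsqrt, show (1 - (1 - 2 * g)) / 2 = g by ring]
  exact hnorm.of_norm.hasSum

theorem hasSum_of_hasSum_sum_fiber {β γ : Type*} {f : β → ℝ} (hf : 0 ≤ f) (g : β → γ)
    (s : γ → Finset β) (hs : ∀ c x, x ∈ s c ↔ g x = c) {a : ℝ}
    (h : HasSum (fun c => ∑ x ∈ s c, f x) a) : HasSum f a := by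
  classical
  have hsum : Summable f := by
    refine summable_of_sum_le (c := a) hf fun u => ?_
    calc ∑ x ∈ u, f x = ∑ c ∈ u.image g, ∑ x ∈ u with g x = c, f x :=
          (sum_fiberwise_of_maps_to (fun x hx => mem_image_of_mem g hx) f).symm
      _ ≤ ∑ c ∈ u.image g, ∑ x ∈ s c, f x :=
          sum_le_sum fun c _ => sum_le_sum_of_subset_of_nonneg
            (fun x hx => (hs c x).mpr (mem_filter.mp hx).2) fun x _ _ => hf x
      _ ≤ a := sum_le_hasSum _ (fun c _ => sum_nonneg fun x _ => hf x) h
  have hfiber : ∀ c, ∑' x : g ⁻¹' {c}, f x = ∑ x ∈ s c, f x := fun c => by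
    have hset : g ⁻¹' {c} = ↑(s c) := by
      ext x
      simp [hs]
    rw [hset, tsum_subtype']
  convert hsum.hasSum
  exact h.unique (by simpa only [hfiber] using hsum.hasSum.tsum_fiberwise g)

theorem HasSum.even_part {K : Type*} [Field K] [CharZero K] [TopologicalSpace K]
    [IsTopologicalRing K] {f : ℕ → K} {a b : K} (ha : HasSum f a)
    (hb : HasSum (fun n => (-1) ^ n * f n) b) : HasSum (fun k => f (2 * k)) ((a + b) / 2) := by
  have h := ((mul_right_injective₀ (two_ne_zero' ℕ)).hasSum_iff fun n hn => ?_).mpr (ha.add hb)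
  · refine (h.div_const 2).congr_fun fun k => ?_
    simp only [Function.comp_apply, pow_mul]
    ring
  · have hodd : Odd n := by
      rw [← Nat.not_even_iff_odd]
      rintro ⟨k, rfl⟩
      exact hn ⟨k, two_mul k⟩
    simp [hodd.neg_one_pow]

theorem HasSum.odd_part {K : Type*} [Field K] [CharZero K] [TopologicalSpace K]
    [IsTopologicalRing K] {f : ℕ → K} {a b : K} (ha : HasSum f a)
    (hb : HasSum (fun n => (-1) ^ n * f n) b) : HasSum (fun k => f (2 * k + 1)) ((a - b) / 2) := by
  have hinj : Function.Injective fun k : ℕ => 2 * k + 1 := fun i j h => by simpa using h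
  have h := (hinj.hasSum_iff fun n hn => ?_).mpr (ha.sub hb)
  · refine (h.div_const 2).congr_fun fun k => ?_
    simp only [Function.comp_apply, pow_succ, pow_mul]
    ring
  · have heven : Even n := by
      rw [← Nat.not_odd_iff_even]
      rintro ⟨k, rfl⟩
      exact hn ⟨k, rfl⟩
    simp [heven.neg_one_pow]

theorem hasSum_catalan_triangle {t : ℝ} (ht₀ : 0 < t) (ht : t ≤ 1 / 4) :
    HasSum (fun x : ℕ × ℕ × ℕ => (catalan (x.1 + x.2.1) : ℝ) * catalan (x.2.1 + x.2.2) *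
        catalan (x.2.2 + x.1) * t ^ (2 * (x.1 + x.2.1 + x.2.2)))
      (((1 - 4 * t) ^ (3 / 2 : ℝ) - (1 + 4 * t) ^ (3 / 2 : ℝ) + 12 * t) / (8 * t ^ 3)) := by
  refine hasSum_of_hasSum_sum_fiber (fun x => by positivity) (fun x => x.1 + x.2.1 + x.2.2)
    antidiagonalTriple (fun n x => mem_antidiagonalTriple) ?_
  simp_rw [sum_antidiagonalTriple_catalan_mul_pow]
  have hpos := hasSum_catalan_mul_pow (y := t) (by rwa [abs_of_pos ht₀])
  have hneg : HasSum (fun n => (-1) ^ n * ((catalan n : ℝ) * t ^ (n + 1)))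
      (-((1 - √(1 + 4 * t)) / 2)) := by
    have h := (hasSum_catalan_mul_pow (y := -t) (by rwa [abs_neg, abs_of_pos ht₀])).neg
    rw [show 1 - 4 * -t = 1 + 4 * t by ring] at h
    refine h.congr_fun fun n => ?_
    rw [neg_pow, pow_succ]
    ring
  have hodd := hpos.odd_part hneg
  have heven := (hasSum_nat_add_iff' 1).mpr (hpos.even_part hneg)
  -- `(α := ℝ)` pins the default instance on `ℝ`, so that `convert` compares only terms and sums.
  have hsum : HasSum (α := ℝ) _ _ :=
    ((hodd.mul_left (16 * t)).sub (heven.mul_left 4)).div_const (8 * t ^ 3)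
  convert hsum using 1
  · ext n
    rw [mul_add_one 2 n]
    field_simp
    ring
  · rw [Real.rpow_three_halves (by linarith), Real.rpow_three_halves (by linarith)]
    simp only [range_one, sum_singleton, mul_zero, catalan_zero]
    ring

/-- For `0 < t ≤ 1/4`, the sum `S(C₃)(t)` associated with the triangle equals
`((1−4t)^{3/2} − (1+4t)^{3/2} + 12t)/(8t³)`; in particular at `t = 1/4` it equals
`24 − 16√2`. -/
theorem stmt_9 :
    (∀ t : ℝ, 0 < t → t ≤ 1 / 4 →
      ∑' x : ℕ × ℕ × ℕ,
        (catalan (x.1 + x.2.1) : ℝ) * (catalan (x.2.1 + x.2.2) : ℝ) *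
          (catalan (x.2.2 + x.1) : ℝ) * t ^ (2 * (x.1 + x.2.1 + x.2.2)) =
        ((1 - 4 * t) ^ (3 / 2 : ℝ) - (1 + 4 * t) ^ (3 / 2 : ℝ) + 12 * t) / (8 * t ^ 3)) ∧
    ∑' x : ℕ × ℕ × ℕ,
      (catalan (x.1 + x.2.1) : ℝ) * (catalan (x.2.1 + x.2.2) : ℝ) *
        (catalan (x.2.2 + x.1) : ℝ) * (1 / 4 : ℝ) ^ (2 * (x.1 + x.2.1 + x.2.2)) =
      24 - 16 * Real.sqrt 2 := by
  refine ⟨fun t ht₀ ht => (hasSum_catalan_triangle ht₀ ht).tsum_eq, ?_⟩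
  rw [(hasSum_catalan_triangle (by norm_num) le_rfl).tsum_eq,
    Real.rpow_three_halves (by norm_num), Real.rpow_three_halves (by norm_num)]
  norm_num
  ring
end

section
/- For every real t with |t| < 1/4, one has H₁(t) = (2(16t²−1)·K(4t) + 4·E(4t))/π, where H₁(t) = ∑_{n≥0} (((−1/2)^{↑n})² / (n!)²) · (16t²)ⁿ, K(k) = ∫_0^{π/2} dθ/√(1−k² sin²θ) and E(k) = ∫_0^{π/2} √(1−k² sin²θ) dθ. -/
/-!
Write `c n = (1/2)^{↑n}/n!` and `e n = (-1/2)^{↑n}/n!`. Integrating the binomial series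
`(1 - x)^{-a} = ∑ a^{↑n}/n! xⁿ` termwise at `x = m sin²θ` against Wallis' integrals
`∫₀^{π/2} sin^{2n} = (π/2) c n` gives `K = (π/2) ∑ (c n)² mⁿ` and `E = (π/2) ∑ e n c n mⁿ`,
with `m = k²`. Pascal's rule `c (n+1) - e (n+1) = c n` makes `∑ (c n - e n)² mⁿ = m ∑ (c n)² mⁿ`,
so expanding `(e n)² = (c n - e n)² - (c n)² + 2 e n c n` gives `H₁ = (m - 1)·2K/π + 2·2E/π`.
-/

open Real

namespace Ring

section Field

variable {K : Type*} [Field K] [CharZero K]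

theorem multichoose_eq_ascPochhammer_eval_div (a : K) (n : ℕ) :
    multichoose a n = (ascPochhammer K n).eval a / n.factorial := by
  rw [eq_div_iff (Nat.cast_ne_zero.2 n.factorial_ne_zero), mul_comm, ← nsmul_eq_mul,
    factorial_nsmul_multichoose_eq_ascPochhammer, Polynomial.ascPochhammer_smeval_eq_eval]

theorem multichoose_succ_mul (a : K) (n : ℕ) :
    multichoose a (n + 1) * (n + 1) = multichoose a n * (a + n) := by
  have hfact : (n.factorial : K) ≠ 0 := Nat.cast_ne_zero.2 n.factorial_ne_zero
  have hsucc : (n : K) + 1 ≠ 0 := Nat.cast_add_one_ne_zero n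
  simp only [multichoose_eq_ascPochhammer_eval_div, ascPochhammer_succ_eval, Nat.factorial_succ]
  push_cast
  field_simp

theorem prod_range_div_eq_multichoose_half (n : ℕ) :
    ∏ i ∈ Finset.range n, (2 * (i : K) + 1) / (2 * i + 2) = multichoose (1 / 2 : K) n := by
  induction n with
  | zero => simp
  | succ n ih =>
    have hsucc : (n : K) + 1 ≠ 0 := Nat.cast_add_one_ne_zero n
    rw [Finset.prod_range_succ, ih, eq_comm, ← mul_left_inj' hsucc, multichoose_succ_mul]
    field_simp
    ring

end Field

theorem hasSum_multichoose_mul_pow (a : ℝ) {x : ℝ} (hx : |x| < 1) :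
    HasSum (fun n ↦ multichoose a n * x ^ n) ((1 - x) ^ (-a)) := by
  have hx1 : 0 ≤ 1 - x := by linarith [le_abs_self x]
  have := (one_div_one_sub_rpow_hasFPowerSeriesOnBall_zero a).hasSum
    (y := x) (by simpa [enorm_eq_nnnorm, ← NNReal.coe_lt_coe] using hx)
  simpa [FormalMultilinearSeries.ofScalars_apply_eq, multichoose_eq, rpow_neg hx1, mul_comm]
    using this

end Ring

open Ring

theorem integral_sin_pow_even_halfPi (n : ℕ) :
    ∫ θ in (0 : ℝ)..π / 2, sin θ ^ (2 * n) = π / 2 * multichoose (1 / 2 : ℝ) n := by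
  have hsymm : ∫ θ in π / 2..π, sin θ ^ (2 * n) = ∫ θ in (0 : ℝ)..π / 2, sin θ ^ (2 * n) := by
    have := intervalIntegral.integral_comp_sub_left (fun θ ↦ sin θ ^ (2 * n)) π
      (a := 0) (b := π / 2)
    simp only [sin_pi_sub, sub_zero, show π - π / 2 = π / 2 by ring] at this
    exact this.symm
  have hsplit := intervalIntegral.integral_add_adjacent_intervals
    (μ := MeasureTheory.volume) (f := fun θ ↦ sin θ ^ (2 * n)) (a := 0) (b := π / 2) (c := π)
    (by apply Continuous.intervalIntegrable; fun_prop)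
    (by apply Continuous.intervalIntegrable; fun_prop)
  rw [hsymm, integral_sin_pow_even, prod_range_div_eq_multichoose_half] at hsplit
  linarith

theorem hasSum_integral_one_sub_mul_sin_sq_rpow (a : ℝ) {m : ℝ} (hm0 : 0 ≤ m) (hm1 : m < 1) :
    HasSum (fun n ↦ multichoose a n * multichoose (1 / 2 : ℝ) n * m ^ n)
      (2 / π * ∫ θ in (0 : ℝ)..π / 2, (1 - m * sin θ ^ 2) ^ (-a)) := by
  have hsin : ∀ θ, 0 ≤ m * sin θ ^ 2 ∧ m * sin θ ^ 2 ≤ m := fun θ ↦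
    ⟨by positivity, mul_le_of_le_one_right hm0 (sin_sq_le_one θ)⟩
  have hbound : Summable fun n ↦ |multichoose a n * m ^ n| :=
    (hasSum_multichoose_mul_pow a (by rwa [abs_of_nonneg hm0])).summable.abs
  have hseries := intervalIntegral.hasSum_integral_of_dominated_convergence
    (μ := MeasureTheory.volume) (a := 0) (b := π / 2)
    (F := fun n θ ↦ multichoose a n * (m * sin θ ^ 2) ^ n)
    (fun n _ ↦ |multichoose a n * m ^ n|)
    (fun n ↦ by apply Continuous.aestronglyMeasurable; fun_prop)
    (fun n ↦ MeasureTheory.ae_of_all _ fun θ _ ↦ by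
      rw [norm_mul, norm_pow, abs_mul, abs_pow, Real.norm_eq_abs, Real.norm_eq_abs,
        abs_of_nonneg (hsin θ).1, abs_of_nonneg hm0]
      gcongr
      exact (hsin θ).2)
    (MeasureTheory.ae_of_all _ fun _ _ ↦ hbound)
    intervalIntegrable_const
    (MeasureTheory.ae_of_all _ fun θ _ ↦ hasSum_multichoose_mul_pow a
      (by rw [abs_of_nonneg (hsin θ).1]; exact (hsin θ).2.trans_lt hm1))
  have hterm (n : ℕ) : ∫ θ in (0 : ℝ)..π / 2, multichoose a n * (m * sin θ ^ 2) ^ n =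
      π / 2 * (multichoose a n * multichoose (1 / 2 : ℝ) n * m ^ n) := by
    simp_rw [mul_pow, ← pow_mul, ← mul_assoc]
    rw [intervalIntegral.integral_const_mul, integral_sin_pow_even_halfPi]
    ring
  simp_rw [hterm] at hseries
  rwa [← hasSum_mul_left_iff (by positivity : π / 2 ≠ 0), ← mul_assoc, div_mul_div_comm,
    mul_comm π 2, div_self (by positivity), one_mul]

theorem hasSum_multichoose_half_sq_mul_pow {m : ℝ} (hm0 : 0 ≤ m) (hm1 : m < 1) :
    HasSum (fun n ↦ multichoose (1 / 2 : ℝ) n ^ 2 * m ^ n)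
      (2 / π * ∫ θ in (0 : ℝ)..π / 2, 1 / √(1 - m * sin θ ^ 2)) := by
  have hint : ∫ θ in (0 : ℝ)..π / 2, 1 / √(1 - m * sin θ ^ 2) =
      ∫ θ in (0 : ℝ)..π / 2, (1 - m * sin θ ^ 2) ^ (-(1 / 2 : ℝ)) := by
    refine intervalIntegral.integral_congr fun θ _ ↦ ?_
    have : 0 ≤ 1 - m * sin θ ^ 2 := by nlinarith [sin_sq_le_one θ]
    rw [rpow_neg this, sqrt_eq_rpow, one_div]
  rw [hint]
  exact (hasSum_integral_one_sub_mul_sin_sq_rpow (1 / 2) hm0 hm1).congr_fun fun n ↦ by ring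

theorem hasSum_multichoose_neg_half_mul_multichoose_half_mul_pow {m : ℝ} (hm0 : 0 ≤ m)
    (hm1 : m < 1) :
    HasSum (fun n ↦ multichoose (-(1 / 2) : ℝ) n * multichoose (1 / 2 : ℝ) n * m ^ n)
      (2 / π * ∫ θ in (0 : ℝ)..π / 2, √(1 - m * sin θ ^ 2)) := by
  simpa only [neg_neg, ← sqrt_eq_rpow] using
    hasSum_integral_one_sub_mul_sin_sq_rpow (-(1 / 2)) hm0 hm1

theorem multichoose_half_succ_sub (n : ℕ) :
    multichoose (1 / 2 : ℝ) (n + 1) - multichoose (-(1 / 2) : ℝ) (n + 1) =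
      multichoose (1 / 2 : ℝ) n := by
  have := multichoose_succ_succ (-(1 / 2) : ℝ) n
  norm_num at this
  linarith

theorem hasSum_multichoose_neg_half_sq_mul_pow {m A B : ℝ}
    (hA : HasSum (fun n ↦ multichoose (1 / 2 : ℝ) n ^ 2 * m ^ n) A)
    (hB : HasSum (fun n ↦ multichoose (-(1 / 2) : ℝ) n * multichoose (1 / 2 : ℝ) n * m ^ n) B) :
    HasSum (fun n ↦ multichoose (-(1 / 2) : ℝ) n ^ 2 * m ^ n) ((m - 1) * A + 2 * B) := by
  have hdiff : HasSum
      (fun n ↦ (multichoose (1 / 2 : ℝ) n - multichoose (-(1 / 2) : ℝ) n) ^ 2 * m ^ n) (m * A) := by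
    rw [← hasSum_nat_add_iff' 1]
    have hshift : HasSum (fun n ↦ (multichoose (1 / 2 : ℝ) (n + 1) -
        multichoose (-(1 / 2) : ℝ) (n + 1)) ^ 2 * m ^ (n + 1)) (m * A) :=
      (hA.mul_left m).congr_fun fun n ↦ by rw [multichoose_half_succ_sub]; ring
    simpa using hshift
  rw [show (m - 1) * A + 2 * B = m * A - A + 2 * B by ring]
  exact ((hdiff.sub hA).add (hB.mul_left 2)).congr_fun fun n ↦ by ring

/-- For `|t| < 1/4`, `H₁(t) = (2(16t²−1)K(4t) + 4E(4t))/π`, where `K` and `E` are the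
complete elliptic integrals of the first and second kind. -/
theorem stmt_11 (t : ℝ) (ht : |t| < 1 / 4) :
    (∑' n : ℕ,
      ((ascPochhammer ℝ n).eval (-(1 / 2) : ℝ)) ^ 2 / ((n.factorial : ℝ)) ^ 2 *
        (16 * t ^ 2) ^ n) =
      (2 * (16 * t ^ 2 - 1) *
          (∫ θ in (0 : ℝ)..(π / 2), 1 / Real.sqrt (1 - (4 * t) ^ 2 * Real.sin θ ^ 2)) +
        4 * (∫ θ in (0 : ℝ)..(π / 2), Real.sqrt (1 - (4 * t) ^ 2 * Real.sin θ ^ 2))) / π := by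
  have hm0 : 0 ≤ 16 * t ^ 2 := by positivity
  have hm1 : 16 * t ^ 2 < 1 := by nlinarith [abs_lt.mp ht]
  have hsum := hasSum_multichoose_neg_half_sq_mul_pow
    (hasSum_multichoose_half_sq_mul_pow hm0 hm1)
    (hasSum_multichoose_neg_half_mul_multichoose_half_mul_pow hm0 hm1)
  simp_rw [← div_pow, ← multichoose_eq_ascPochhammer_eval_div, hsum.tsum_eq,
    show (4 * t) ^ 2 = 16 * t ^ 2 by ring]
  field_simp
  ring
end

section
/- For every integer s ≥ 1 and every n ∈ ℕ, one has (n+s) · ∑_{m₁+⋯+m_s = n} Cat_{m₁} ⋯ Cat_{m_s} = s · binom(2n+s−1, n), where the sum is over all s-tuples (m₁,…,m_s) of nonnegative integers with m₁+⋯+m_s = n. -/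
/-!
Read the left-hand side as the `n`-th coefficient of `C(t)^s`, where `C = 1 + t C²` is the Catalan
series. Multiplying `C = 1 + t C²` by `C^s` gives the recurrence
`[tⁿ⁺¹] C^(s+1) = [tⁿ⁺¹] C^s + [tⁿ] C^(s+2)`, and the closed form `s/(n+s) · binom(2n+s-1, n)`
satisfies the same recurrence and boundary values, by Pascal's rule.
-/

open PowerSeries

namespace PowerSeries

variable {R : Type*} [CommSemiring R]

theorem coeff_prod_fin {k : ℕ} (f : Fin k → R⟦X⟧) (n : ℕ) :
    coeff n (∏ i, f i) = ∑ m ∈ Finset.Nat.antidiagonalTuple k n, ∏ i, coeff (m i) (f i) := by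
  rw [coeff_prod, ← Finset.piAntidiag_univ_fin_eq_antidiagonalTuple]
  exact Finset.sum_equiv Finsupp.equivFunOnFinite (by simp) (by simp)

theorem coeff_pow_eq_sum_antidiagonalTuple (φ : R⟦X⟧) (k n : ℕ) :
    coeff n (φ ^ k) = ∑ m ∈ Finset.Nat.antidiagonalTuple k n, ∏ i, coeff (m i) φ := by
  rw [← Fin.prod_const, coeff_prod_fin]

theorem catalanSeries_pow_succ (s : ℕ) :
    catalanSeries ^ (s + 1) = catalanSeries ^ s + X * catalanSeries ^ (s + 2) :=
  calc catalanSeries ^ (s + 1) = catalanSeries ^ s * (catalanSeries ^ 2 * X + 1) := by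
        rw [catalanSeries_sq_mul_X_add_one, pow_succ]
    _ = catalanSeries ^ s + X * catalanSeries ^ (s + 2) := by ring

theorem coeff_succ_catalanSeries_pow_succ (s n : ℕ) :
    coeff (n + 1) (catalanSeries ^ (s + 1)) =
      coeff (n + 1) (catalanSeries ^ s) + coeff n (catalanSeries ^ (s + 2)) := by
  rw [catalanSeries_pow_succ, map_add, coeff_succ_X_mul]

end PowerSeries

-- The recurrence of `coeff_succ_catalanSeries_pow_succ` for `s * binom(2n+s-1, n) / (n+s)`,
-- with the denominators cleared.
theorem Nat.add_succ_mul_succ_mul_choose_succ (n s : ℕ) :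
    (n + s + 1) * ((s + 1) * (2 * n + s + 2).choose (n + 1)) =
      (n + s + 2) * (s * (2 * n + s + 1).choose (n + 1)) +
        (n + s + 1) * ((s + 2) * (2 * n + s + 1).choose n) := by
  have hpascal := Nat.choose_succ_succ' (2 * n + s + 1) n
  have hratio := Nat.choose_succ_right_eq (2 * n + s + 1) n
  rw [show 2 * n + s + 1 - n = n + s + 1 by omega] at hratio
  rw [hpascal]
  linear_combination hratio

theorem add_mul_coeff_catalanSeries_pow (n s : ℕ) :
    (n + s) * coeff n (catalanSeries ^ s) = s * (2 * n + s - 1).choose n := by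
  induction n generalizing s with
  | zero => simp [catalanSeries_constantCoeff]
  | succ n ihn =>
    induction s with
    | zero => simp
    | succ s ihs =>
      have ihn' := ihn (s + 2)
      rw [show 2 * n + (s + 2) - 1 = 2 * n + s + 1 by omega] at ihn'
      rw [show 2 * (n + 1) + s - 1 = 2 * n + s + 1 by omega] at ihs
      rw [show 2 * (n + 1) + (s + 1) - 1 = 2 * n + s + 2 by omega,
        coeff_succ_catalanSeries_pow_succ]
      apply Nat.eq_of_mul_eq_mul_left (show 0 < n + s + 1 by omega)
      rw [Nat.add_succ_mul_succ_mul_choose_succ, ← ihs, ← ihn']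
      ring

theorem stmt_12_general (s : ℕ) (n : ℕ) :
    (n + s) * ∑ m ∈ Finset.Nat.antidiagonalTuple s n, ∏ i, catalan (m i) =
      s * Nat.choose (2 * n + s - 1) n := by
  simpa only [coeff_pow_eq_sum_antidiagonalTuple, catalanSeries_coeff] using
    add_mul_coeff_catalanSeries_pow n s

/-- For `s ≥ 1` and `n ∈ ℕ`,
`(n+s) · ∑_{m₁+⋯+m_s = n} Cat_{m₁} ⋯ Cat_{m_s} = s · binom(2n+s−1, n)`. -/
theorem stmt_12 (s : ℕ) (hs : 1 ≤ s) (n : ℕ) :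
    (n + s) * ∑ m ∈ Finset.Nat.antidiagonalTuple s n, ∏ i, catalan (m i) =
      s * Nat.choose (2 * n + s - 1) n :=
  stmt_12_general s n
end
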